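/- Suppose α ∈ (0,1], K ≥ 0, and u ∈ C^{1,α}(B_R) satisfies, for every r ∈ (0, R/2], the bound [∇u]_{C^{0,α}(B_r)} ≤ K r^{-α} ( (1/(2r)) inf_{l affine} (avg_{B_{2r}} |u - l|²)^{1/2} ). Then there exists σ = σ(α,K) ∈ (0, 1/2] such that for every r ∈ (0, R/2] and s := σ r: (1/s) inf_{l affine} (avg_{B_s} |u - l|²)^{1/2} ≤ (1/2)·(1/r) inf_{l affine} (avg_{B_{2r}} |u - l|²)^{1/2}. -/

import Mathlib

open MeasureTheory Metric
open scoped RealInnerProductSpace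

noncomputable section

/-- The normalized `L²` norm `(⨍_{B_r} u²)^{1/2}` of `u` on the ball `B_r` centered at
the origin. -/
def avgL2 (d : ℕ) (u : EuclideanSpace ℝ (Fin d) → ℝ) (r : ℝ) : ℝ :=
  Real.sqrt (((volume (ball (0 : EuclideanSpace ℝ (Fin d)) r)).toReal)⁻¹ *
    ∫ x in ball (0 : EuclideanSpace ℝ (Fin d)) r, (u x) ^ 2)

/-- `inf_{l affine} (⨍_{B_r} |u - l|²)^{1/2}`. -/
def flatAffine (d : ℕ) (u : EuclideanSpace ℝ (Fin d) → ℝ) (r : ℝ) : ℝ :=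
  sInf {y : ℝ | ∃ (c : ℝ) (p : EuclideanSpace ℝ (Fin d)),
    y = avgL2 d (fun x => u x - (c + ⟪p, x⟫)) r}

/-
The first-order Taylor polynomial `l₀(x) = u(0) + ⟪∇u(0), x⟫` is an admissible competitor
at scale `s = σr`. By the mean value inequality and the Hölder bound on `∇u` at scale `r`,
`|u - l₀| ≤ K r^{-α} Φ s^α · s` on `B_s`, where `Φ = (1/(2r)) flatAffine (2r)`, so the
normalized flatness at scale `s` is at most `K σ^α Φ`. Choosing `σ` with `K σ^α ≤ 1` gives
the claim.
-/

section Taylor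

variable {E : Type*} [NormedAddCommGroup E] [InnerProductSpace ℝ E] [CompleteSpace E]

lemma norm_gradient_sub_gradient (u : E → ℝ) (x y : E) :
    ‖gradient u x - gradient u y‖ = ‖fderiv ℝ u x - fderiv ℝ u y‖ := by
  rw [gradient, gradient, ← map_sub, LinearIsometryEquiv.norm_map]

lemma abs_sub_taylor_le_of_norm_fderiv_sub_le {u : E → ℝ} {s ε : ℝ}
    (hu : ∀ x ∈ ball (0 : E) s, DifferentiableAt ℝ u x)
    (hε : ∀ y ∈ ball (0 : E) s, ‖fderiv ℝ u y - fderiv ℝ u 0‖ ≤ ε) {x : E}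
    (hx : x ∈ ball (0 : E) s) :
    |u x - (u 0 + ⟪gradient u 0, x⟫)| ≤ ε * ‖x‖ := by
  have hmv := (convex_ball (0 : E) s).norm_image_sub_le_of_norm_fderiv_le' hu hε
    (mem_ball_self (pos_of_mem_ball hx)) hx
  rw [sub_zero] at hmv
  rwa [gradient, InnerProductSpace.toDual_symm_apply, ← sub_sub]

end Taylor

section Flatness

variable {d : ℕ}

lemma avgL2_le_of_abs_le {f : EuclideanSpace ℝ (Fin d) → ℝ} {r C : ℝ} (hC : 0 ≤ C)
    (hf : ∀ x ∈ ball (0 : EuclideanSpace ℝ (Fin d)) r, |f x| ≤ C) : avgL2 d f r ≤ C := by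
  set V := (volume (ball (0 : EuclideanSpace ℝ (Fin d)) r)).toReal
  have hint : ∫ x in ball (0 : EuclideanSpace ℝ (Fin d)) r, f x ^ 2 ≤ C ^ 2 * V := by
    refine (Real.le_norm_self _).trans
      (norm_setIntegral_le_of_norm_le_const measure_ball_lt_top ?_)
    intro x hx
    rw [Real.norm_eq_abs, abs_pow]
    exact pow_le_pow_left₀ (abs_nonneg _) (hf x hx) 2
  have hmean : V⁻¹ * ∫ x in ball (0 : EuclideanSpace ℝ (Fin d)) r, f x ^ 2 ≤ C ^ 2 :=
    calc V⁻¹ * ∫ x in ball (0 : EuclideanSpace ℝ (Fin d)) r, f x ^ 2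
        ≤ V⁻¹ * (C ^ 2 * V) := mul_le_mul_of_nonneg_left hint (by positivity)
      _ = C ^ 2 * (V * V⁻¹) := by ring
      -- `V = 0` when the ball is null (`r ≤ 0`), and then `V⁻¹ = 0`
      _ ≤ C ^ 2 * 1 := mul_le_mul_of_nonneg_left mul_inv_le_one (by positivity)
      _ = C ^ 2 := mul_one _
  exact Real.sqrt_le_iff.mpr ⟨hC, hmean⟩

lemma flatAffine_nonneg (u : EuclideanSpace ℝ (Fin d) → ℝ) (r : ℝ) :
    0 ≤ flatAffine d u r :=
  Real.sInf_nonneg (by rintro y ⟨c, p, rfl⟩; exact Real.sqrt_nonneg _)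

lemma flatAffine_le_avgL2 (u : EuclideanSpace ℝ (Fin d) → ℝ) (r c : ℝ)
    (p : EuclideanSpace ℝ (Fin d)) :
    flatAffine d u r ≤ avgL2 d (fun x => u x - (c + ⟪p, x⟫)) r :=
  csInf_le ⟨0, by rintro y ⟨c, p, rfl⟩; exact Real.sqrt_nonneg _⟩ ⟨c, p, rfl⟩

lemma flatAffine_le_of_norm_fderiv_sub_le {u : EuclideanSpace ℝ (Fin d) → ℝ} {s ε : ℝ}
    (hs : 0 ≤ s) (hε0 : 0 ≤ ε)
    (hu : ∀ x ∈ ball (0 : EuclideanSpace ℝ (Fin d)) s, DifferentiableAt ℝ u x)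
    (hε : ∀ y ∈ ball (0 : EuclideanSpace ℝ (Fin d)) s,
      ‖fderiv ℝ u y - fderiv ℝ u 0‖ ≤ ε) :
    flatAffine d u s ≤ ε * s := by
  refine (flatAffine_le_avgL2 u s (u 0) (gradient u 0)).trans
    (avgL2_le_of_abs_le (mul_nonneg hε0 hs) fun x hx => ?_)
  exact (abs_sub_taylor_le_of_norm_fderiv_sub_le hu hε hx).trans
    (mul_le_mul_of_nonneg_left (mem_ball_zero_iff.mp hx).le hε0)

end Flatness

lemma exists_mul_rpow_le_one {α : ℝ} (hα : 0 < α) (K : ℝ) :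
    ∃ σ : ℝ, 0 < σ ∧ σ ≤ 1 / 2 ∧ K * σ ^ α ≤ 1 := by
  set τ := (1 + |K|)⁻¹ ^ α⁻¹
  have hτ : 0 < τ := by positivity
  have hτα : τ ^ α = (1 + |K|)⁻¹ := by
    rw [← Real.rpow_mul (by positivity), inv_mul_cancel₀ hα.ne', Real.rpow_one]
  refine ⟨min (1 / 2) τ, lt_min (by norm_num) hτ, min_le_left _ _, ?_⟩
  calc K * min (1 / 2) τ ^ α ≤ |K| * τ ^ α := by
        gcongr
        · exact le_abs_self K
        · exact min_le_right _ _
    _ = |K| * (1 + |K|)⁻¹ := by rw [hτα]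
    _ ≤ 1 := by rw [mul_inv_le_iff₀ (by positivity)]; linarith

theorem stmt17_general (α K : ℝ) (hα₀ : 0 < α) (hK : 0 ≤ K) :
    ∃ σ : ℝ, 0 < σ ∧ σ ≤ 1 / 2 ∧
      ∀ (d : ℕ) (R : ℝ) (u : EuclideanSpace ℝ (Fin d) → ℝ), 0 < R →
        (∀ x ∈ ball (0 : EuclideanSpace ℝ (Fin d)) R, DifferentiableAt ℝ u x) →
        (∀ r, 0 < r → r ≤ R / 2 →
          ∀ x ∈ ball (0 : EuclideanSpace ℝ (Fin d)) r,
          ∀ y ∈ ball (0 : EuclideanSpace ℝ (Fin d)) r,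
            ‖gradient u x - gradient u y‖ ≤
              (K * r ^ (-α) * ((1 / (2 * r)) * flatAffine d u (2 * r))) * ‖x - y‖ ^ α) →
        ∀ r, 0 < r → r ≤ R / 2 →
          (1 / (σ * r)) * flatAffine d u (σ * r) ≤
            (1 / 2) * ((1 / r) * flatAffine d u (2 * r)) := by
  obtain ⟨σ, hσ₀, hσ, hKσ⟩ := exists_mul_rpow_le_one hα₀ K
  refine ⟨σ, hσ₀, hσ, fun d R u _ hu hHol r hr hrR => ?_⟩
  set Φ := (1 / (2 * r)) * flatAffine d u (2 * r)
  have hΦ : 0 ≤ Φ := mul_nonneg (by positivity) (flatAffine_nonneg u _)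
  set s := σ * r
  have hs₀ : 0 < s := by positivity
  have hsr : s ≤ r / 2 := by nlinarith
  have hgrad : ∀ y ∈ ball (0 : EuclideanSpace ℝ (Fin d)) s,
      ‖fderiv ℝ u y - fderiv ℝ u 0‖ ≤ K * r ^ (-α) * Φ * s ^ α := by
    intro y hy
    rw [← norm_gradient_sub_gradient]
    calc _ ≤ K * r ^ (-α) * Φ * ‖y - 0‖ ^ α :=
          hHol r hr hrR y (ball_subset_ball (by linarith) hy) 0 (mem_ball_self hr)
      _ ≤ K * r ^ (-α) * Φ * s ^ α := by
          rw [sub_zero]; gcongr; exact (mem_ball_zero_iff.mp hy).le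
  have hflat := flatAffine_le_of_norm_fderiv_sub_le hs₀.le (by positivity)
    (fun x hx => hu x (ball_subset_ball (by linarith) hx)) hgrad
  have hscale : r ^ (-α) * s ^ α = σ ^ α := by
    rw [Real.mul_rpow hσ₀.le hr.le, Real.rpow_neg hr.le]
    field_simp
  calc (1 / s) * flatAffine d u s ≤ (1 / s) * (K * r ^ (-α) * Φ * s ^ α * s) := by gcongr
    _ = K * σ ^ α * Φ := by rw [← hscale]; field_simp
    _ ≤ Φ := mul_le_of_le_one_left hΦ hKσ
    _ = (1 / 2) * ((1 / r) * flatAffine d u (2 * r)) := by ring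

/-- Improvement of flatness from a `C^{1,α}`-type bound on the gradient: if for every
`r ∈ (0, R/2]` the `α`-Hölder seminorm of `∇u` on `B_r` is at most
`K r^{-α} · ((1/(2r)) inf_l (⨍_{B_{2r}} |u-l|²)^{1/2})`, then for some `σ = σ(α,K) ∈ (0,1/2]`
the affine flatness improves by a factor `1/2` from scale `2r` to scale `σr`. -/
theorem stmt17 (α K : ℝ) (hα₀ : 0 < α) (hα : α ≤ 1) (hK : 0 ≤ K) :
    ∃ σ : ℝ, 0 < σ ∧ σ ≤ 1 / 2 ∧
      ∀ (d : ℕ) (R : ℝ) (u : EuclideanSpace ℝ (Fin d) → ℝ), 0 < R →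
        (∀ x ∈ ball (0 : EuclideanSpace ℝ (Fin d)) R, DifferentiableAt ℝ u x) →
        (∀ r, 0 < r → r ≤ R / 2 →
          ∀ x ∈ ball (0 : EuclideanSpace ℝ (Fin d)) r,
          ∀ y ∈ ball (0 : EuclideanSpace ℝ (Fin d)) r,
            ‖gradient u x - gradient u y‖ ≤
              (K * r ^ (-α) * ((1 / (2 * r)) * flatAffine d u (2 * r))) * ‖x - y‖ ^ α) →
        ∀ r, 0 < r → r ≤ R / 2 →
          (1 / (σ * r)) * flatAffine d u (σ * r) ≤
            (1 / 2) * ((1 / r) * flatAffine d u (2 * r)) :=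
  stmt17_general α K hα₀ hK

end
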